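/- The hypergeometric sum ∑_{n=0}^∞ ((1/2)_n)² / ((3/2)_n · n!) equals π/2, where (x)_n denotes the Pochhammer symbol (rising factorial). -/

import Mathlib

open Real

/-- Pochhammer symbol (rising factorial) `(x)_n`. -/
noncomputable def poch (x : ℝ) (n : ℕ) : ℝ := (ascPochhammer ℝ n).eval x

/-!
Since `(1/2)_n / (3/2)_n = 1 / (2n + 1) = ∫₀¹ t^(2n) dt`, the `n`-th term is
`∫₀¹ ((1/2)_n / n!) t^(2n) dt`, and `∑ (1/2)_n / n! · s^n = (1 - s)^(-1/2)` is the binomial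
series. Summing under the integral (dominated convergence, all terms being nonnegative) gives
`∫₀¹ dt / √(1 - t²) = arcsin 1 = π / 2`.
-/

open Set MeasureTheory intervalIntegral
open scoped Nat Interval

lemma poch_pos {x : ℝ} (hx : 0 < x) (n : ℕ) : 0 < poch x n := ascPochhammer_pos n x hx

lemma poch_add_one_mul (x : ℝ) (n : ℕ) : poch (x + 1) n * x = poch x n * (x + n) := by
  unfold poch
  rw [← ascPochhammer_succ_eval, ascPochhammer_succ_left, Polynomial.eval_mul,
    Polynomial.eval_comp]
  simp [mul_comm]

lemma ringChoose_add_sub_one_eq_poch_div_factorial (x : ℝ) (n : ℕ) :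
    Ring.choose (x + n - 1) n = poch x n / n ! := by
  rw [Ring.choose_eq_smul, Polynomial.descPochhammer_smeval_eq_ascPochhammer,
    Polynomial.ascPochhammer_smeval_eq_eval, smul_eq_mul, poch]
  ring_nf

lemma hasSum_poch_div_factorial_mul_pow (a : ℝ) {s : ℝ} (hs : |s| < 1) :
    HasSum (fun n ↦ poch a n / n ! * s ^ n) (1 / (1 - s) ^ a) := by
  have h := (one_div_one_sub_rpow_hasFPowerSeriesOnBall_zero a).hasSum
    (y := s) (by simpa [enorm_eq_nnnorm, ← NNReal.coe_lt_coe] using hs)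
  simpa [FormalMultilinearSeries.ofScalars_apply_eq, ringChoose_add_sub_one_eq_poch_div_factorial,
    mul_comm] using h

lemma hasSum_one_div_sqrt_one_sub_sq {x : ℝ} (hx : |x| < 1) :
    HasSum (fun n ↦ poch (1 / 2) n / n ! * x ^ (2 * n)) (1 / √(1 - x ^ 2)) := by
  have hx2 : |x ^ 2| < 1 := by rw [abs_pow]; exact pow_lt_one₀ (abs_nonneg x) hx two_ne_zero
  rw [sqrt_eq_rpow]
  simpa [pow_mul] using hasSum_poch_div_factorial_mul_pow (1 / 2) hx2

lemma hasDerivAt_arcsin_eq_tsum {x : ℝ} (hx : x ∈ Ioo (-1) 1) :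
    HasDerivAt arcsin (∑' n, poch (1 / 2) n / n ! * x ^ (2 * n)) x := by
  rw [(hasSum_one_div_sqrt_one_sub_sq (abs_lt.2 hx)).tsum_eq]
  exact hasDerivAt_arcsin hx.1.ne' hx.2.ne

lemma hasSum_intervalIntegral_poch_div_factorial_mul_pow :
    HasSum (fun n ↦ ∫ t in (0)..1, poch (1 / 2) n / n ! * t ^ (2 * n)) (π / 2) := by
  set F : ℕ → ℝ → ℝ := fun n t ↦ poch (1 / 2) n / n ! * t ^ (2 * n)
  have hF_nonneg : ∀ n, ∀ t ∈ Ioc (0 : ℝ) 1, 0 ≤ F n t := fun n t ht ↦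
    mul_nonneg (div_nonneg (poch_pos one_half_pos n).le (Nat.cast_nonneg _))
      (pow_nonneg ht.1.le _)
  have hderiv : ∀ t ∈ Ioo (0 : ℝ) 1, HasDerivAt arcsin (∑' n, F n t) t := fun t ht ↦
    hasDerivAt_arcsin_eq_tsum ⟨by linarith [ht.1], ht.2⟩
  have hint : IntervalIntegrable (fun t ↦ ∑' n, F n t) volume 0 1 :=
    intervalIntegrable_deriv_of_nonneg continuous_arcsin.continuousOn
      (by simpa using hderiv)
      (by simpa using fun t ht ↦ tsum_nonneg fun n ↦ hF_nonneg n t (Ioo_subset_Ioc_self ht))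
  -- the series diverges at `t = 1`, a null set
  have hsum : ∀ᵐ t, t ∈ Ι (0 : ℝ) 1 → HasSum (fun n ↦ F n t) (∑' n, F n t) := by
    filter_upwards [volume.ae_ne 1] with t ht1 ht
    rw [uIoc_of_le zero_le_one] at ht
    exact (hasSum_one_div_sqrt_one_sub_sq
      (abs_lt.2 ⟨by linarith [ht.1], lt_of_le_of_ne ht.2 ht1⟩)).summable.hasSum
  have hval : ∫ t in (0)..1, ∑' n, F n t = π / 2 := by
    rw [integral_eq_sub_of_hasDerivAt_of_le zero_le_one continuous_arcsin.continuousOn hderiv hint]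
    simp
  rw [← hval]
  refine hasSum_integral_of_dominated_convergence F
    (fun n ↦ (by fun_prop : Continuous (F n)).aestronglyMeasurable) (fun n ↦ ?_)
    (hsum.mono fun t h ht ↦ (h ht).summable) hint hsum
  refine .of_forall fun t ht ↦ ?_
  rw [uIoc_of_le zero_le_one] at ht
  exact (norm_of_nonneg (hF_nonneg n t ht)).le

lemma poch_half_sq_div_poch_three_halves_mul_factorial (n : ℕ) :
    poch (1 / 2) n ^ 2 / (poch (3 / 2) n * n !) = poch (1 / 2) n / n ! / (2 * n + 1) := by
  have h : poch (3 / 2) n * (1 / 2) = poch (1 / 2) n * (1 / 2 + n) := by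
    convert poch_add_one_mul (1 / 2) n using 3; norm_num
  have hp := (poch_pos one_half_pos n).ne'
  have h3 := (poch_pos (by norm_num : (0 : ℝ) < 3 / 2) n).ne'
  field_simp
  linear_combination -2 * h

lemma integral_const_mul_pow_two_mul (c : ℝ) (n : ℕ) :
    ∫ t in (0)..1, c * t ^ (2 * n) = c / (2 * n + 1) := by
  rw [intervalIntegral.integral_const_mul, integral_pow]
  push_cast
  ring

theorem stmt1 :
    ∑' n : ℕ, (poch (1/2) n) ^ 2 / (poch (3/2) n * n.factorial) = π / 2 := by
  simp_rw [poch_half_sq_div_poch_three_halves_mul_factorial, ← integral_const_mul_pow_two_mul]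
  exact hasSum_intervalIntegral_poch_div_factorial_mul_pow.tsum_eq
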